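/- arXiv:1909.12602 — 4 statements merged into one kernel-verified Lean document; each statement's English description precedes it below -/
import Mathlib

section
/- Let ω₁ and ω₂ be analytic functions mapping the unit disk D into its closure with |ω₁(z)| < 1 and |ω₂(z)| < 1 on D. Then for every real θ and all z ∈ D, Re[ (1 − ω₁(z) conj(ω₂(z))) / ((1 + e^{−2iθ} ω₁(z))(1 + e^{2iθ} conj(ω₂(z)))) ] > 0. -/
open Complex ComplexConjugate

/-!
The Cayley map `u ↦ (1 - u) / (1 + u)` sends the unit disk into the right half-plane, and
`(1 - u v̄) / ((1 + u)(1 + v̄))` is the average of the images of `u` and of `v̄`, so its real part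
is positive. Rotating `ω₁(z)` and `ω₂(z)` by the same unimodular `e^{-2iθ}` leaves `ω₁(z) conj(ω₂(z))`
unchanged and reduces the theorem to this case.
-/

theorem one_add_ne_zero_of_norm_lt_one {u : ℂ} (hu : ‖u‖ < 1) : 1 + u ≠ 0 := by
  intro h
  rw [eq_neg_of_add_eq_zero_right h, norm_neg, norm_one] at hu
  exact lt_irrefl _ hu

theorem re_one_sub_div_one_add_pos {u : ℂ} (hu : ‖u‖ < 1) : 0 < ((1 - u) / (1 + u)).re := by
  have hnum : (1 - u).re * (1 + u).re + (1 - u).im * (1 + u).im = 1 - ‖u‖ ^ 2 := by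
    rw [← normSq_eq_norm_sq, normSq_apply]
    simp only [sub_re, sub_im, add_re, add_im, one_re, one_im]
    ring
  rw [div_re, ← add_div, hnum]
  exact div_pos (by nlinarith [norm_nonneg u]) (normSq_pos.mpr (one_add_ne_zero_of_norm_lt_one hu))

theorem one_sub_mul_conj_div_eq_cayley_add {u v : ℂ} (hu : 1 + u ≠ 0) (hv : 1 + v ≠ 0) :
    (1 - u * conj v) / ((1 + u) * (1 + conj v)) =
      ((1 - u) / (1 + u) + conj ((1 - v) / (1 + v))) / 2 := by
  have hv' : 1 + conj v ≠ 0 := by simpa using (map_ne_zero conj).mpr hv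
  simp only [map_div₀, map_sub, map_add, map_one]
  field_simp
  ring

theorem re_one_sub_mul_conj_div_pos {u v : ℂ} (hu : ‖u‖ < 1) (hv : ‖v‖ < 1) :
    0 < ((1 - u * conj v) / ((1 + u) * (1 + conj v))).re := by
  rw [one_sub_mul_conj_div_eq_cayley_add (one_add_ne_zero_of_norm_lt_one hu)
    (one_add_ne_zero_of_norm_lt_one hv)]
  simp only [div_ofNat_re, add_re, conj_re]
  linarith [re_one_sub_div_one_add_pos hu, re_one_sub_div_one_add_pos hv]

theorem re_one_sub_mul_conj_div_rotate_pos {c u v : ℂ} (hc : ‖c‖ = 1) (hu : ‖u‖ < 1)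
    (hv : ‖v‖ < 1) : 0 < ((1 - u * conj v) / ((1 + c * u) * (1 + conj c * conj v))).re := by
  have hcu : ‖c * u‖ < 1 := by rwa [norm_mul, hc, one_mul]
  have hcv : ‖c * v‖ < 1 := by rwa [norm_mul, hc, one_mul]
  have hc_conj : c * conj c = 1 := by rw [mul_conj, normSq_eq_norm_sq, hc]; norm_num
  convert re_one_sub_mul_conj_div_pos hcu hcv using 4
  · rw [map_mul]
    linear_combination (-(u * conj v)) * hc_conj
  · rw [map_mul]

theorem two_dilatation_positivity_general (ω₁ ω₂ : ℂ → ℂ)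
    (hb₁ : ∀ z ∈ Metric.ball (0 : ℂ) 1, ‖ω₁ z‖ < 1)
    (hb₂ : ∀ z ∈ Metric.ball (0 : ℂ) 1, ‖ω₂ z‖ < 1) :
    ∀ (θ : ℝ), ∀ z ∈ Metric.ball (0 : ℂ) 1,
      0 < ((1 - ω₁ z * (starRingEnd ℂ) (ω₂ z)) /
        ((1 + Complex.exp (-(2 * Complex.I * (θ : ℂ))) * ω₁ z) *
          (1 + Complex.exp (2 * Complex.I * (θ : ℂ)) * (starRingEnd ℂ) (ω₂ z)))).re := by
  intro θ z hz
  have h_norm : ‖exp (-(2 * I * θ))‖ = 1 := by simp [norm_exp]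
  have h_conj : exp (2 * I * θ) = conj (exp (-(2 * I * θ))) := by
    rw [← exp_conj]
    simp [map_ofNat]
  rw [h_conj]
  exact re_one_sub_mul_conj_div_rotate_pos h_norm (hb₁ z hz) (hb₂ z hz)

/-- For analytic self-maps `ω₁, ω₂` of the unit disk, any real `θ` and `z` in the disk,
`Re[(1 - ω₁(z) conj(ω₂(z))) / ((1 + e^{-2iθ} ω₁(z))(1 + e^{2iθ} conj(ω₂(z))))] > 0`. -/
theorem two_dilatation_positivity (ω₁ ω₂ : ℂ → ℂ)
    (hω₁ : DifferentiableOn ℂ ω₁ (Metric.ball 0 1))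
    (hω₂ : DifferentiableOn ℂ ω₂ (Metric.ball 0 1))
    (hb₁ : ∀ z ∈ Metric.ball (0 : ℂ) 1, ‖ω₁ z‖ < 1)
    (hb₂ : ∀ z ∈ Metric.ball (0 : ℂ) 1, ‖ω₂ z‖ < 1) :
    ∀ (θ : ℝ), ∀ z ∈ Metric.ball (0 : ℂ) 1,
      0 < ((1 - ω₁ z * (starRingEnd ℂ) (ω₂ z)) /
        ((1 + Complex.exp (-(2 * Complex.I * (θ : ℂ))) * ω₁ z) *
          (1 + Complex.exp (2 * Complex.I * (θ : ℂ)) * (starRingEnd ℂ) (ω₂ z)))).re :=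
  two_dilatation_positivity_general ω₁ ω₂ hb₁ hb₂
end

section
/- Let a'₁, a'₂ ∈ (−1,1), and define b₂ = 1 − (a'₁a'₂)², b₀ = ((1 + a'₂)(1 − 3a'₁ + 3a'₁a'₂ − (a'₁)²a'₂))/2. Then b₂² − b₀² = ((1−a'₁)(1−a'₂)/4) · (3 + a'₂ + a'₁a'₂ + 3a'₁(a'₂)²) · (1 + 3a'₁ + 3a'₁a'₂ + (a'₁)²a'₂). In particular, |b₂| > |b₀| if and only if 1 + 3a'₁ + 3a'₁a'₂ + (a'₁)²a'₂ > 0. -/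
/-!
`b₂² - b₀²` factors, by a polynomial identity, into `(1 + 3a₁ + 3a₁a₂ + a₁²a₂)` times a prefactor
that is positive on the open square `(-1, 1)²`. Comparing `|b₂|` with `|b₀|` is comparing their
squares, so it reduces to the sign of the remaining factor.
-/

theorem abs_lt_abs_iff_pos_of_sq_sub_sq_eq_mul {R : Type*} [Ring R] [LinearOrder R]
    [IsStrictOrderedRing R] {x y p l : R} (hp : 0 < p) (h : x ^ 2 - y ^ 2 = p * l) :
    |y| < |x| ↔ 0 < l := by
  rw [← sq_lt_sq, ← sub_pos, h, mul_pos_iff_of_pos_left hp]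

-- The expression is affine in `a₁`, so it is a convex combination of its values at `a₁ = ±1`.
theorem three_add_add_mul_add_mul_sq_pos {a₁ a₂ : ℝ} (ha₁ : -1 < a₁ ∧ a₁ < 1)
    (ha₂ : -1 < a₂ ∧ a₂ < 1) : 0 < 3 + a₂ + a₁ * a₂ + 3 * a₁ * a₂ ^ 2 := by
  obtain ⟨ha₁_gt, ha₁_lt⟩ := ha₁
  obtain ⟨ha₂_gt, ha₂_lt⟩ := ha₂
  have h_at_one : 0 < 3 + 2 * a₂ + 3 * a₂ ^ 2 := by nlinarith [sq_nonneg (1 + a₂)]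
  have h_at_neg_one : 0 < 3 * ((1 - a₂) * (1 + a₂)) := by
    have : 0 < (1 - a₂) * (1 + a₂) := mul_pos (by linarith) (by linarith)
    positivity
  have h_combination : 2 * (3 + a₂ + a₁ * a₂ + 3 * a₁ * a₂ ^ 2)
      = (1 + a₁) * (3 + 2 * a₂ + 3 * a₂ ^ 2) + (1 - a₁) * (3 * ((1 - a₂) * (1 + a₂))) := by
    ring
  have : 0 < (1 + a₁) * (3 + 2 * a₂ + 3 * a₂ ^ 2) + (1 - a₁) * (3 * ((1 - a₂) * (1 + a₂))) :=
    add_pos (mul_pos (by linarith) h_at_one) (mul_pos (by linarith) h_at_neg_one)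
  linarith

/-- The key identity for `b₂² - b₀²` in Case 2 of Theorem `unit3`, together with the
characterization `|b₂| > |b₀| ↔ 1 + 3a₁ + 3a₁a₂ + a₁²a₂ > 0`. -/
theorem b_sq_difference (a₁ a₂ : ℝ) (ha₁ : -1 < a₁ ∧ a₁ < 1) (ha₂ : -1 < a₂ ∧ a₂ < 1) :
    ((1 - (a₁ * a₂) ^ 2) ^ 2 - (((1 + a₂) * (1 - 3 * a₁ + 3 * a₁ * a₂ - a₁ ^ 2 * a₂)) / 2) ^ 2
        = ((1 - a₁) * (1 - a₂) / 4) * (3 + a₂ + a₁ * a₂ + 3 * a₁ * a₂ ^ 2) *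
            (1 + 3 * a₁ + 3 * a₁ * a₂ + a₁ ^ 2 * a₂))
    ∧ (|1 - (a₁ * a₂) ^ 2| > |((1 + a₂) * (1 - 3 * a₁ + 3 * a₁ * a₂ - a₁ ^ 2 * a₂)) / 2|
        ↔ 0 < 1 + 3 * a₁ + 3 * a₁ * a₂ + a₁ ^ 2 * a₂) := by
  have h_identity : (1 - (a₁ * a₂) ^ 2) ^ 2
      - (((1 + a₂) * (1 - 3 * a₁ + 3 * a₁ * a₂ - a₁ ^ 2 * a₂)) / 2) ^ 2
      = ((1 - a₁) * (1 - a₂) / 4) * (3 + a₂ + a₁ * a₂ + 3 * a₁ * a₂ ^ 2) *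
          (1 + 3 * a₁ + 3 * a₁ * a₂ + a₁ ^ 2 * a₂) := by
    ring
  have h_prefactor_pos : 0 < ((1 - a₁) * (1 - a₂) / 4) * (3 + a₂ + a₁ * a₂ + 3 * a₁ * a₂ ^ 2) := by
    have h₁ : 0 < 1 - a₁ := by linarith [ha₁.2]
    have h₂ : 0 < 1 - a₂ := by linarith [ha₂.2]
    have := three_add_add_mul_add_mul_sq_pos ha₁ ha₂
    positivity
  exact ⟨h_identity, abs_lt_abs_iff_pos_of_sq_sub_sq_eq_mul h_prefactor_pos h_identity⟩
end

section
/- Let a'₁, a'₂ ∈ (−1,1) and set u = −(1 + 3a'₂ + 3a'₁a'₂ + a'₁(a'₂)²), v = 3 + a'₂ + a'₁a'₂ + 3a'₁(a'₂)². Then u² − v² = −8(1 − (a'₂)²)(1 − (a'₁a'₂)²) < 0; consequently v ≠ 0 and |u/v| < 1, i.e., the point z₀ = u/v lies in the open unit disk. -/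
section LinearOrderedField

variable {K : Type*} [Field K] [LinearOrder K] [IsStrictOrderedRing K]

lemma abs_pos_of_sq_lt_sq {u v : K} (h : u ^ 2 < v ^ 2) : 0 < |v| :=
  (abs_nonneg u).trans_lt (sq_lt_sq.1 h)

lemma abs_div_lt_one_of_sq_lt_sq {u v : K} (h : u ^ 2 < v ^ 2) : |u / v| < 1 := by
  rw [abs_div, div_lt_one (abs_pos_of_sq_lt_sq h)]
  exact sq_lt_sq.1 h

lemma one_sub_sq_pos_of_abs_lt_one {a : K} (ha : |a| < 1) : 0 < 1 - a ^ 2 :=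
  sub_pos.2 ((sq_lt_one_iff_abs_lt_one a).2 ha)

lemma abs_mul_lt_one {a b : K} (ha : |a| < 1) (hb : |b| < 1) : |a * b| < 1 := by
  rw [abs_mul]
  exact mul_lt_one_of_nonneg_of_lt_one_left (abs_nonneg a) ha hb.le

end LinearOrderedField

/-- With `u = -(1 + 3a₂ + 3a₁a₂ + a₁a₂²)` and `v = 3 + a₂ + a₁a₂ + 3a₁a₂²` for
`a₁, a₂ ∈ (-1,1)`, we have `u² - v² = -8(1-a₂²)(1-(a₁a₂)²) < 0`, `v ≠ 0` and `|u/v| < 1`. -/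
theorem zero_in_disk (a₁ a₂ : ℝ) (ha₁ : -1 < a₁ ∧ a₁ < 1) (ha₂ : -1 < a₂ ∧ a₂ < 1) :
    ((-(1 + 3 * a₂ + 3 * a₁ * a₂ + a₁ * a₂ ^ 2)) ^ 2
          - (3 + a₂ + a₁ * a₂ + 3 * a₁ * a₂ ^ 2) ^ 2
        = -8 * (1 - a₂ ^ 2) * (1 - (a₁ * a₂) ^ 2))
    ∧ ((-(1 + 3 * a₂ + 3 * a₁ * a₂ + a₁ * a₂ ^ 2)) ^ 2
          - (3 + a₂ + a₁ * a₂ + 3 * a₁ * a₂ ^ 2) ^ 2 < 0)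
    ∧ (3 + a₂ + a₁ * a₂ + 3 * a₁ * a₂ ^ 2 ≠ 0)
    ∧ |(-(1 + 3 * a₂ + 3 * a₁ * a₂ + a₁ * a₂ ^ 2)) /
        (3 + a₂ + a₁ * a₂ + 3 * a₁ * a₂ ^ 2)| < 1 := by
  set u := -(1 + 3 * a₂ + 3 * a₁ * a₂ + a₁ * a₂ ^ 2)
  set v := 3 + a₂ + a₁ * a₂ + 3 * a₁ * a₂ ^ 2
  have h₁ : |a₁| < 1 := abs_lt.2 ha₁
  have h₂ : |a₂| < 1 := abs_lt.2 ha₂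
  have key : u ^ 2 - v ^ 2 = -8 * (1 - a₂ ^ 2) * (1 - (a₁ * a₂) ^ 2) := by ring
  have hneg : u ^ 2 - v ^ 2 < 0 := by
    have := mul_pos (one_sub_sq_pos_of_abs_lt_one h₂)
      (one_sub_sq_pos_of_abs_lt_one (abs_mul_lt_one h₁ h₂))
    linarith
  have hlt : u ^ 2 < v ^ 2 := sub_neg.1 hneg
  exact ⟨key, hneg, abs_pos.1 (abs_pos_of_sq_lt_sq hlt), abs_div_lt_one_of_sq_lt_sq hlt⟩
end

section
/- Let ω₁, …, ω_n be analytic self-maps of the unit disk D, let c be a unimodular constant, and let t₁, …, t_n be nonnegative reals summing to 1. Then for every z ∈ D, |Σ_j t_j/(1 + c ω_j(z))|² > |Σ_j t_j ω_j(z)/(1 + c ω_j(z))|². -/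
/-!
With `w_j = c ω_j(z)` in the unit disk, `c · Σ t_j ω_j/(1 + w_j) = 1 - A` where
`A = Σ t_j/(1 + w_j)`, so the claim reads `|1 - A| < |A|`, i.e. `Re A > 1/2`.
The map `w ↦ 1/(1 + w)` sends the unit disk into the half-plane `Re > 1/2`, which is convex,
so it contains the convex combination `A`.
-/

namespace Complex

theorem one_half_lt_re_inv_one_add {w : ℂ} (hw : ‖w‖ < 1) : 1 / 2 < (1 + w)⁻¹.re := by
  have hsq : normSq w < 1 := by
    rw [← Complex.sq_norm]; nlinarith [norm_nonneg w]
  have hre : -1 < w.re := by linarith [neg_abs_le w.re, abs_re_le_norm w]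
  have hnormSq : normSq (1 + w) = 1 + 2 * w.re + normSq w := by
    simp only [normSq_apply, add_re, add_im, one_re, one_im]; ring
  have hpos : 0 < normSq (1 + w) := by
    rw [hnormSq]; nlinarith [normSq_nonneg w, re_sq_le_normSq w]
  rw [inv_re, lt_div_iff₀ hpos, hnormSq, add_re, one_re]
  linarith

theorem norm_one_sub_lt_norm {A : ℂ} (h : 1 / 2 < A.re) : ‖1 - A‖ < ‖A‖ := by
  have hnormSq : normSq (1 - A) = 1 - 2 * A.re + normSq A := by
    simp only [normSq_apply, sub_re, sub_im, one_re, one_im]; ring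
  rw [← sq_lt_sq₀ (norm_nonneg _) (norm_nonneg _), Complex.sq_norm, Complex.sq_norm, hnormSq]
  linarith

theorem one_half_lt_re_sum_div_one_add {ι : Type*} [Fintype ι] {t : ι → ℝ} {w : ι → ℂ}
    (ht : ∀ j, 0 ≤ t j) (hts : ∑ j, t j = 1) (hw : ∀ j, ‖w j‖ < 1) :
    1 / 2 < (∑ j, (t j : ℂ) / (1 + w j)).re := by
  have hmem := (convex_halfSpace_re_gt (1 / 2)).sum_mem (fun j _ => ht j) hts
    (z := fun j => (1 + w j)⁻¹) fun j _ => one_half_lt_re_inv_one_add (hw j)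
  simpa only [real_smul, div_eq_mul_inv, Set.mem_ofPred_eq] using hmem

theorem mul_sum_mul_div_one_add_mul {ι : Type*} [Fintype ι] {τ w : ι → ℂ} (c : ℂ)
    (hτ : ∑ j, τ j = 1) (hw : ∀ j, 1 + c * w j ≠ 0) :
    c * ∑ j, τ j * w j / (1 + c * w j) = 1 - ∑ j, τ j / (1 + c * w j) := by
  have hterm : ∀ j, c * (τ j * w j / (1 + c * w j)) = τ j - τ j / (1 + c * w j) := by
    intro j
    field_simp [hw j]
    ring
  rw [Finset.mul_sum, Finset.sum_congr rfl fun j _ => hterm j, Finset.sum_sub_distrib, hτ]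

end Complex

theorem convex_combination_jacobian_positive_general (n : ℕ) (ω : Fin n → ℂ → ℂ) (c : ℂ)
    (hc : ‖c‖ = 1)
    (hωb : ∀ j, ∀ z ∈ Metric.ball (0 : ℂ) 1, ‖ω j z‖ < 1)
    (t : Fin n → ℝ) (ht : ∀ j, 0 ≤ t j) (hts : ∑ j, t j = 1) :
    ∀ z ∈ Metric.ball (0 : ℂ) 1,
      ‖∑ j, (t j : ℂ) / (1 + c * ω j z)‖ ^ 2 >
        ‖∑ j, (t j : ℂ) * ω j z / (1 + c * ω j z)‖ ^ 2 := by
  intro z hz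
  have hw : ∀ j, ‖c * ω j z‖ < 1 := fun j => by
    simpa only [norm_mul, hc, one_mul] using hωb j z hz
  have hne : ∀ j, 1 + c * ω j z ≠ 0 := fun j h => by
    have hneg : c * ω j z = -1 := by linear_combination h
    simpa [hneg] using hw j
  have hτ : ∑ j, (t j : ℂ) = 1 := by exact_mod_cast hts
  have hnorm : ‖∑ j, (t j : ℂ) * ω j z / (1 + c * ω j z)‖
      = ‖1 - ∑ j, (t j : ℂ) / (1 + c * ω j z)‖ := by
    rw [← Complex.mul_sum_mul_div_one_add_mul c hτ hne, norm_mul, hc, one_mul]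
  rw [gt_iff_lt, hnorm]
  have hre := Complex.one_half_lt_re_sum_div_one_add ht hts hw
  exact pow_lt_pow_left₀ (Complex.norm_one_sub_lt_norm hre) (norm_nonneg _) two_ne_zero

/-- Positivity of `Φ` for convex combinations: for analytic self-maps `ω_j` of the disk,
unimodular `c` and convex weights `t_j`,
`|Σ t_j/(1 + c ω_j(z))|² > |Σ t_j ω_j(z)/(1 + c ω_j(z))|²` on the disk. -/
theorem convex_combination_jacobian_positive (n : ℕ) (ω : Fin n → ℂ → ℂ) (c : ℂ)
    (hc : ‖c‖ = 1)
    (hω : ∀ j, DifferentiableOn ℂ (ω j) (Metric.ball 0 1))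
    (hωb : ∀ j, ∀ z ∈ Metric.ball (0 : ℂ) 1, ‖ω j z‖ < 1)
    (t : Fin n → ℝ) (ht : ∀ j, 0 ≤ t j) (hts : ∑ j, t j = 1) :
    ∀ z ∈ Metric.ball (0 : ℂ) 1,
      ‖∑ j, (t j : ℂ) / (1 + c * ω j z)‖ ^ 2 >
        ‖∑ j, (t j : ℂ) * ω j z / (1 + c * ω j z)‖ ^ 2 :=
  convex_combination_jacobian_positive_general n ω c hc hωb t ht hts
end
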